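/- arXiv:math/0605304 — 7 statements merged into one kernel-verified Lean document; each statement's English description precedes it below -/
import Mathlib

section
/- Let 𝒜 be a (strict) 2-category. Then 𝒜 satisfies axioms F1 and F2 if and only if 𝒜 satisfies axioms WF1, WF2 and WF3. -/
open CategoryTheory Bicategory CategoryTheory.Limits

universe w₂ v₂ u₂ w v u p p' t s t' s' t₁ s₁ t₂ s₂

namespace DubucStreet

variable {𝒜 : Type u} [Bicategory.{w, v} 𝒜]

/-- The LL equation for a pair of 2-cells `(α, β)` relative to `(γ₁, γ₂)`. -/
def LLeq {E A B C₁ C₂ C : 𝒜} (f : E ⟶ A) (g : E ⟶ B)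
    {u₁ : A ⟶ C₁} {v₁ : B ⟶ C₁} {u₂ : A ⟶ C₂} {v₂ : B ⟶ C₂}
    (γ₁ : f ≫ u₁ ⟶ g ≫ v₁) (γ₂ : f ≫ u₂ ⟶ g ≫ v₂)
    (w₁ : C₁ ⟶ C) (w₂ : C₂ ⟶ C)
    (α : v₁ ≫ w₁ ⟶ v₂ ≫ w₂) (β : u₁ ≫ w₁ ⟶ u₂ ≫ w₂) : Prop :=
  (α_ f u₁ w₁).inv ≫ (γ₁ ▷ w₁) ≫ (α_ g v₁ w₁).hom ≫ (g ◁ α) =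
    (f ◁ β) ≫ (α_ f u₂ w₂).inv ≫ (γ₂ ▷ w₂) ≫ (α_ g v₂ w₂).hom

/-- Axiom F1 : every cospan of 1-cells can be completed to a square with an
invertible 2-cell. -/
def AxiomF1 (𝒜 : Type u) [Bicategory.{w, v} 𝒜] : Prop :=
  ∀ {E A B : 𝒜} (f : E ⟶ A) (g : E ⟶ B),
    ∃ (C : 𝒜) (u : A ⟶ C) (v : B ⟶ C), Nonempty (f ≫ u ≅ g ≫ v)

/-- Axiom F2 : any two 2-cells as below can be equalized by a pair of invertible
2-cells satisfying the LL equation. -/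
def AxiomF2 (𝒜 : Type u) [Bicategory.{w, v} 𝒜] : Prop :=
  ∀ {E A B C₁ C₂ : 𝒜} {f : E ⟶ A} {g : E ⟶ B}
    {u₁ : A ⟶ C₁} {v₁ : B ⟶ C₁} {u₂ : A ⟶ C₂} {v₂ : B ⟶ C₂}
    (γ₁ : f ≫ u₁ ⟶ g ≫ v₁) (γ₂ : f ≫ u₂ ⟶ g ≫ v₂),
    ∃ (C : 𝒜) (w₁ : C₁ ⟶ C) (w₂ : C₂ ⟶ C)
      (α : v₁ ≫ w₁ ≅ v₂ ≫ w₂) (β : u₁ ≫ w₁ ≅ u₂ ≫ w₂),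
      LLeq f g γ₁ γ₂ w₁ w₂ α.hom β.hom

/-- Axiom WF1 : as F1 but the 2-cell need not be invertible. -/
def AxiomWF1 (𝒜 : Type u) [Bicategory.{w, v} 𝒜] : Prop :=
  ∀ {E A B : 𝒜} (f : E ⟶ A) (g : E ⟶ B),
    ∃ (C : 𝒜) (u : A ⟶ C) (v : B ⟶ C), Nonempty (f ≫ u ⟶ g ≫ v)

/-- Axiom WF2 : as F2 but only for invertible `γ₁` and `γ₂`. -/
def AxiomWF2 (𝒜 : Type u) [Bicategory.{w, v} 𝒜] : Prop :=
  ∀ {E A B C₁ C₂ : 𝒜} {f : E ⟶ A} {g : E ⟶ B}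
    {u₁ : A ⟶ C₁} {v₁ : B ⟶ C₁} {u₂ : A ⟶ C₂} {v₂ : B ⟶ C₂}
    (γ₁ : f ≫ u₁ ≅ g ≫ v₁) (γ₂ : f ≫ u₂ ≅ g ≫ v₂),
    ∃ (C : 𝒜) (w₁ : C₁ ⟶ C) (w₂ : C₂ ⟶ C)
      (α : v₁ ≫ w₁ ≅ v₂ ≫ w₂) (β : u₁ ≫ w₁ ≅ u₂ ≫ w₂),
      LLeq f g γ₁.hom γ₂.hom w₁ w₂ α.hom β.hom

/-- Axiom WF3 : any 2-cell can be made invertible on either side by composing with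
suitable invertible 2-cells. -/
def AxiomWF3 (𝒜 : Type u) [Bicategory.{w, v} 𝒜] : Prop :=
  ∀ {E A B C : 𝒜} {f : E ⟶ A} {g : E ⟶ B} {u : A ⟶ C} {v : B ⟶ C}
    (γ : f ≫ u ⟶ g ≫ v),
    (∃ (C₂ D₂ : 𝒜) (s₂ : B ⟶ C₂) (w₂ : C₂ ⟶ D₂) (h₂ : C ⟶ D₂)
        (α : v ≫ h₂ ≅ s₂ ≫ w₂),
        IsIso ((α_ f u h₂).inv ≫ (γ ▷ h₂) ≫ (α_ g v h₂).hom ≫ (g ◁ α.hom))) ∧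
    (∃ (C₁ D₁ : 𝒜) (s₁ : A ⟶ C₁) (w₁ : C₁ ⟶ D₁) (h₁ : C ⟶ D₁)
        (β : s₁ ≫ w₁ ≅ u ≫ h₁),
        IsIso ((f ◁ β.hom) ≫ (α_ f u h₁).inv ≫ (γ ▷ h₁) ≫ (α_ g v h₁).hom))

theorem paste {E A B C₁ C₂ P Q R S T : 𝒜} {f : E ⟶ A} {g : E ⟶ B}
    {u₁ : A ⟶ C₁} {v₁ : B ⟶ C₁} {u₂ : A ⟶ C₂} {v₂ : B ⟶ C₂}
    (γ₁ : f ≫ u₁ ⟶ g ≫ v₁) (γ₂ : f ≫ u₂ ⟶ g ≫ v₂)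
    {s : B ⟶ P} {w : P ⟶ Q} {h : C₁ ⟶ Q}
    {s' : A ⟶ R} {w' : R ⟶ S} {h' : C₂ ⟶ S}
    (α₁ : v₁ ≫ h ⟶ s ≫ w) (β₂ : s' ≫ w' ⟶ u₂ ≫ h')
    {t₁ : Q ⟶ T} {t₂ : S ⟶ T}
    (α' : (s ≫ w) ≫ t₁ ⟶ (v₂ ≫ h') ≫ t₂) (β' : (u₁ ≫ h) ≫ t₁ ⟶ (s' ≫ w') ≫ t₂)
    (LL : LLeq f g
        ((α_ f u₁ h).inv ≫ γ₁ ▷ h ≫ (α_ g v₁ h).hom ≫ g ◁ α₁)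
        (f ◁ β₂ ≫ (α_ f u₂ h').inv ≫ γ₂ ▷ h' ≫ (α_ g v₂ h').hom)
        t₁ t₂ α' β') :
    LLeq f g γ₁ γ₂ (h ≫ t₁) (h' ≫ t₂)
      ((α_ v₁ h t₁).inv ≫ α₁ ▷ t₁ ≫ α' ≫ (α_ v₂ h' t₂).hom)
      ((α_ u₁ h t₁).inv ≫ β' ≫ β₂ ▷ t₂ ≫ (α_ u₂ h' t₂).hom) := by
  unfold LLeq at LL ⊢
  calc (α_ f u₁ (h ≫ t₁)).inv ≫ γ₁ ▷ (h ≫ t₁) ≫ (α_ g v₁ (h ≫ t₁)).hom ≫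
        g ◁ ((α_ v₁ h t₁).inv ≫ α₁ ▷ t₁ ≫ α' ≫ (α_ v₂ h' t₂).hom)
      = f ◁ (α_ u₁ h t₁).inv ≫
        ((α_ f (u₁ ≫ h) t₁).inv ≫
          ((α_ f u₁ h).inv ≫ γ₁ ▷ h ≫ (α_ g v₁ h).hom ≫ g ◁ α₁) ▷ t₁ ≫
          (α_ g (s ≫ w) t₁).hom ≫ g ◁ α') ≫
        g ◁ (α_ v₂ h' t₂).hom := by bicategory
    _ = f ◁ (α_ u₁ h t₁).inv ≫
        (f ◁ β' ≫ (α_ f (s' ≫ w') t₂).inv ≫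
          (f ◁ β₂ ≫ (α_ f u₂ h').inv ≫ γ₂ ▷ h' ≫ (α_ g v₂ h').hom) ▷ t₂ ≫
          (α_ g (v₂ ≫ h') t₂).hom) ≫
        g ◁ (α_ v₂ h' t₂).hom := by rw [LL]
    _ = f ◁ ((α_ u₁ h t₁).inv ≫ β' ≫ β₂ ▷ t₂ ≫ (α_ u₂ h' t₂).hom) ≫
        (α_ f u₂ (h' ≫ t₂)).inv ≫ γ₂ ▷ (h' ≫ t₂) ≫ (α_ g v₂ (h' ≫ t₂)).hom := by
      bicategory

/-- A 2-category satisfies axioms F1 and F2 if and only if it satisfies axioms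
WF1, WF2 and WF3. -/
theorem f1_f2_iff_wf1_wf2_wf3 (𝒜 : Type u) [Bicategory.{w, v} 𝒜] [Bicategory.Strict 𝒜] :
    (AxiomF1 𝒜 ∧ AxiomF2 𝒜) ↔ (AxiomWF1 𝒜 ∧ AxiomWF2 𝒜 ∧ AxiomWF3 𝒜) := by
  constructor
  · rintro ⟨hF1, hF2⟩
    refine ⟨fun f g => ?_, fun γ₁ γ₂ => hF2 γ₁.hom γ₂.hom, fun γ => ?_⟩
    · obtain ⟨C, u, v, ⟨e⟩⟩ := hF1 f g
      exact ⟨C, u, v, ⟨e.hom⟩⟩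
    · obtain ⟨C', u', v', ⟨δ⟩⟩ := hF1 _ _
      constructor
      · obtain ⟨D, w₁, w₂, α, β, LL⟩ := hF2 γ δ.hom
        refine ⟨C', D, v', w₂, w₁, α, ?_⟩
        rw [LLeq] at LL
        rw [LL]
        infer_instance
      · obtain ⟨D, w₁, w₂, α, β, LL⟩ := hF2 δ.hom γ
        refine ⟨C', D, u', w₁, w₂, β, ?_⟩
        rw [LLeq] at LL
        rw [← LL]
        infer_instance
  · rintro ⟨hWF1, hWF2, hWF3⟩
    constructor
    · intro E A B f g
      obtain ⟨C, u, v, ⟨γ⟩⟩ := hWF1 f g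
      obtain ⟨⟨C₂, D₂, s₂, w₂, h₂, α, hiso⟩, -⟩ := hWF3 γ
      exact ⟨D₂, u ≫ h₂, s₂ ≫ w₂,
        ⟨asIso ((α_ f u h₂).inv ≫ (γ ▷ h₂) ≫ (α_ g v h₂).hom ≫ (g ◁ α.hom))⟩⟩
    · intro E A B C₁ C₂ f g u₁ v₁ u₂ v₂ γ₁ γ₂
      obtain ⟨⟨P, Q, s, w, h, α₁, hiso₁⟩, -⟩ := hWF3 γ₁
      obtain ⟨-, ⟨R, S, s', w', h', β₂, hiso₂⟩⟩ := hWF3 γ₂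
      obtain ⟨C, t₁, t₂, α', β', LL⟩ := hWF2
        (asIso ((α_ f u₁ h).inv ≫ (γ₁ ▷ h) ≫ (α_ g v₁ h).hom ≫ (g ◁ α₁.hom)))
        (asIso ((f ◁ β₂.hom) ≫ (α_ f u₂ h').inv ≫ (γ₂ ▷ h') ≫ (α_ g v₂ h').hom))
      refine ⟨C, h ≫ t₁, h' ≫ t₂,
        (α_ v₁ h t₁).symm ≪≫ whiskerRightIso α₁ t₁ ≪≫ α' ≪≫ α_ v₂ h' t₂,
        (α_ u₁ h t₁).symm ≪≫ β' ≪≫ whiskerRightIso β₂ t₂ ≪≫ α_ u₂ h' t₂, ?_⟩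
      have := paste γ₁ γ₂ α₁.hom β₂.hom α'.hom β'.hom LL
      simpa using this


end DubucStreet
end

section
/- Let 𝒜 be a pre-2-filtered 2-category and F a pseudofunctor from 𝒜 to Cat. Given premorphisms ξ₁, ξ₂, ξ₃ : (A, x) → (B, y) with codomains C₁, C₂, C₃ and homotopies (w₁, w₂, α, β) : ξ₁ ⇒ ξ₂ with vertex C and (w₂′, w₃, α′, β′) : ξ₂ ⇒ ξ₃ with vertex C′, there exist 1-cells h : C ⟶ H, h′ : C′ ⟶ H and an invertible 2-cell γ : w₂ ≫ h ⟹ w₂′ ≫ h′ such that (w₁ ≫ h, w₃ ≫ h′, α′ ∘_γ α, β′ ∘_γ β) is a homotopy ξ₁ ⇒ ξ₃, where α′ ∘_γ α denotes the vertical composite (α ▷ h) ≫ (v₂ ◁ γ) ≫ (α′ ▷ h′) : v₁ ≫ (w₁ ≫ h) ⟹ v₃ ≫ (w₃ ≫ h′) and similarly for β′ ∘_γ β. In particular, equivalence of premorphisms is transitive. -/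
open CategoryTheory Bicategory CategoryTheory.Limits

universe w₂ v₂ u₂ w v u p p' t s t' s' t₁ s₁ t₂ s₂

namespace DubucStreet

variable {𝒜 : Type u} [Bicategory.{w, v} 𝒜]

/-- A premorphism `(A, x) → (B, y)` : a cospan `u : A ⟶ C`, `v : B ⟶ C` together with a
morphism `ξ : F(u)(x) ⟶ F(v)(y)` in `F(C)`. -/
structure Premor (F : Pseudofunctor 𝒜 Cat.{v₂, u₂}) (A B : 𝒜) (x : F.obj A) (y : F.obj B) where
  cod : 𝒜
  u : A ⟶ cod
  v : B ⟶ cod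
  ξ : (F.map u).toFunctor.obj x ⟶ (F.map v).toFunctor.obj y

/-- The LL equation for homotopy data `(w₁, w₂, α, β)` between two premorphisms :
`F(w₁)(ξ₁) ≫ F(α)_y = F(β)_x ≫ F(w₂)(ξ₂)`, all identifications being made via the
compositor isomorphisms of `F`. -/
def HomotopyLL (F : Pseudofunctor 𝒜 Cat.{v₂, u₂}) {A B : 𝒜} {x : F.obj A} {y : F.obj B}
    (p q : Premor F A B x y) {V : 𝒜} (w₁ : p.cod ⟶ V) (w₂ : q.cod ⟶ V)
    (α : p.v ≫ w₁ ⟶ q.v ≫ w₂) (β : p.u ≫ w₁ ⟶ q.u ≫ w₂) : Prop :=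
  (F.map w₁).toFunctor.map p.ξ ≫ (F.mapComp p.v w₁).inv.toNatTrans.app y ≫ (F.map₂ α).toNatTrans.app y ≫
      (F.mapComp q.v w₂).hom.toNatTrans.app y =
    (F.mapComp p.u w₁).inv.toNatTrans.app x ≫ (F.map₂ β).toNatTrans.app x ≫ (F.mapComp q.u w₂).hom.toNatTrans.app x ≫
      (F.map w₂).toFunctor.map q.ξ

/-- A homotopy `(w₁, w₂, α, β)` between two premorphisms. -/
structure Homotopy (F : Pseudofunctor 𝒜 Cat.{v₂, u₂}) {A B : 𝒜} {x : F.obj A} {y : F.obj B}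
    (p q : Premor F A B x y) where
  vertex : 𝒜
  w₁ : p.cod ⟶ vertex
  w₂ : q.cod ⟶ vertex
  α : p.v ≫ w₁ ≅ q.v ≫ w₂
  β : p.u ≫ w₁ ≅ q.u ≫ w₂
  ll : HomotopyLL F p q w₁ w₂ α.hom β.hom

/-- Two premorphisms are equivalent when there is a homotopy from one to the other. -/
def PreEquiv (F : Pseudofunctor 𝒜 Cat.{v₂, u₂}) {A B : 𝒜} {x : F.obj A} {y : F.obj B}
    (p q : Premor F A B x y) : Prop :=
  Nonempty (Homotopy F p q)

/-- `α' ∘_γ α` : the LL-composition of the 2-cells `α` and `α'` over `γ`. -/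
def compOver {X C₁ C₂ C₃ V V' H : 𝒜} {v₁ : X ⟶ C₁} {v₂ : X ⟶ C₂} {v₃ : X ⟶ C₃}
    {w₁ : C₁ ⟶ V} {w₂ : C₂ ⟶ V} {w₂' : C₂ ⟶ V'} {w₃ : C₃ ⟶ V'}
    (α : v₁ ≫ w₁ ⟶ v₂ ≫ w₂) (α' : v₂ ≫ w₂' ⟶ v₃ ≫ w₃)
    {h : V ⟶ H} {h' : V' ⟶ H} (γ : w₂ ≫ h ⟶ w₂' ≫ h') :
    v₁ ≫ (w₁ ≫ h) ⟶ v₃ ≫ (w₃ ≫ h') :=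
  (α_ v₁ w₁ h).inv ≫ (α ▷ h) ≫ (α_ v₂ w₂ h).hom ≫ (v₂ ◁ γ) ≫
    (α_ v₂ w₂' h').inv ≫ (α' ▷ h') ≫ (α_ v₃ w₃ h').hom

/-! A 2-cell `θ : f ≫ g ⟶ f' ≫ g'` induces, through the compositors of `F`, a natural
transformation `F(g) ∘ F(f) ⟶ F(g') ∘ F(f')` (`squareApp`); that of `α' ∘_γ α` factors as
`F(h)(F α)`, then `F γ`, then `F(h')(F α')`. With `γ` a square closing the cospan `w₂, w₂'`
(axiom F1), the LL equation of the composite follows by sliding `F(w₁ ≫ h)(ξ₁)` through the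
three factors: the first LL equation under `F(h)`, naturality of `F γ` at `ξ₂`, and the second
LL equation under `F(h')`. -/

section

variable (F : Pseudofunctor 𝒜 Cat.{v₂, u₂})

lemma mapComp_hom_naturality {X Y Z : 𝒜} (f : X ⟶ Y) (g : Y ⟶ Z) {z z' : F.obj X} (t : z ⟶ z') :
    (F.map (f ≫ g)).toFunctor.map t ≫ (F.mapComp f g).hom.toNatTrans.app z' =
      (F.mapComp f g).hom.toNatTrans.app z ≫ (F.map g).toFunctor.map ((F.map f).toFunctor.map t) :=
  (F.mapComp f g).hom.toNatTrans.naturality t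

lemma mapComp_inv_naturality {X Y Z : 𝒜} (f : X ⟶ Y) (g : Y ⟶ Z) {z z' : F.obj X} (t : z ⟶ z') :
    (F.map g).toFunctor.map ((F.map f).toFunctor.map t) ≫ (F.mapComp f g).inv.toNatTrans.app z' =
      (F.mapComp f g).inv.toNatTrans.app z ≫ (F.map (f ≫ g)).toFunctor.map t :=
  (F.mapComp f g).inv.toNatTrans.naturality t

def squareApp {X Y Y' Z : 𝒜} {f : X ⟶ Y} {g : Y ⟶ Z} {f' : X ⟶ Y'} {g' : Y' ⟶ Z}
    (θ : f ≫ g ⟶ f' ≫ g') (z : F.obj X) :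
    (F.map g).toFunctor.obj ((F.map f).toFunctor.obj z) ⟶
      (F.map g').toFunctor.obj ((F.map f').toFunctor.obj z) :=
  (F.mapComp f g).inv.toNatTrans.app z ≫ (F.map₂ θ).toNatTrans.app z ≫
    (F.mapComp f' g').hom.toNatTrans.app z

lemma squareApp_naturality {X Y Y' Z : 𝒜} {f : X ⟶ Y} {g : Y ⟶ Z} {f' : X ⟶ Y'} {g' : Y' ⟶ Z}
    (θ : f ≫ g ⟶ f' ≫ g') {z z' : F.obj X} (t : z ⟶ z') :
    (F.map g).toFunctor.map ((F.map f).toFunctor.map t) ≫ squareApp F θ z' =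
      squareApp F θ z ≫ (F.map g').toFunctor.map ((F.map f').toFunctor.map t) := by
  simp only [squareApp, Category.assoc]
  rw [reassoc_of% mapComp_inv_naturality F f g t, NatTrans.naturality_assoc,
    mapComp_hom_naturality]

lemma squareApp_comp {X Y Y' Y'' Z : 𝒜} {f : X ⟶ Y} {g : Y ⟶ Z} {f' : X ⟶ Y'} {g' : Y' ⟶ Z}
    {f'' : X ⟶ Y''} {g'' : Y'' ⟶ Z} (θ : f ≫ g ⟶ f' ≫ g') (θ' : f' ≫ g' ⟶ f'' ≫ g'')
    (z : F.obj X) : squareApp F (θ ≫ θ') z = squareApp F θ z ≫ squareApp F θ' z := by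
  simp [squareApp]

lemma squareApp_whiskerLeft {X Y Z : 𝒜} (f : X ⟶ Y) {g g' : Y ⟶ Z} (θ : g ⟶ g')
    (z : F.obj X) :
    squareApp F (f ◁ θ) z = (F.map₂ θ).toNatTrans.app ((F.map f).toFunctor.obj z) := by
  simp [squareApp]

lemma squareApp_whiskerRight {X Y Z : 𝒜} {f f' : X ⟶ Y} (θ : f ⟶ f') (g : Y ⟶ Z)
    (z : F.obj X) :
    squareApp F (θ ▷ g) z = (F.map g).toFunctor.map ((F.map₂ θ).toNatTrans.app z) := by
  simp [squareApp]

lemma squareApp_associator_hom {W X Y Z : 𝒜} (f : W ⟶ X) (g : X ⟶ Y) (h : Y ⟶ Z) (z : F.obj W) :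
    squareApp F (α_ f g h).hom z = (F.map h).toFunctor.map ((F.mapComp f g).hom.toNatTrans.app z) ≫
      (F.mapComp g h).inv.toNatTrans.app ((F.map f).toFunctor.obj z) := by
  simp [squareApp]

lemma squareApp_associator_inv {W X Y Z : 𝒜} (f : W ⟶ X) (g : X ⟶ Y) (h : Y ⟶ Z) (z : F.obj W) :
    squareApp F (α_ f g h).inv z = (F.mapComp g h).hom.toNatTrans.app ((F.map f).toFunctor.obj z) ≫
      (F.map h).toFunctor.map ((F.mapComp f g).inv.toNatTrans.app z) := by
  have hassoc := F.mapComp_assoc_left_inv_app f g h z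
  simp only [squareApp]
  rw [← cancel_epi ((F.mapComp g h).inv.toNatTrans.app ((F.map f).toFunctor.obj z)),
    ← reassoc_of% hassoc]
  simp

lemma squareApp_compOver {X C₁ C₂ C₃ V V' H : 𝒜} {v₁ : X ⟶ C₁} {v₂ : X ⟶ C₂} {v₃ : X ⟶ C₃}
    {w₁ : C₁ ⟶ V} {w₂ : C₂ ⟶ V} {w₂' : C₂ ⟶ V'} {w₃ : C₃ ⟶ V'}
    (α : v₁ ≫ w₁ ⟶ v₂ ≫ w₂) (α' : v₂ ≫ w₂' ⟶ v₃ ≫ w₃)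
    {h : V ⟶ H} {h' : V' ⟶ H} (γ : w₂ ≫ h ⟶ w₂' ≫ h') (z : F.obj X) :
    squareApp F (compOver α α' γ) z =
      (F.mapComp w₁ h).hom.toNatTrans.app ((F.map v₁).toFunctor.obj z) ≫
        (F.map h).toFunctor.map (squareApp F α z) ≫ squareApp F γ ((F.map v₂).toFunctor.obj z) ≫
        (F.map h').toFunctor.map (squareApp F α' z) ≫
        (F.mapComp w₃ h').inv.toNatTrans.app ((F.map v₃).toFunctor.obj z) := by
  simp only [compOver, squareApp_comp, squareApp_associator_hom, squareApp_associator_inv,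
    squareApp_whiskerLeft, squareApp_whiskerRight]
  simp [squareApp]

lemma homotopyLL_iff {A B : 𝒜} {x : F.obj A} {y : F.obj B} (p q : Premor F A B x y) {V : 𝒜}
    (w₁ : p.cod ⟶ V) (w₂ : q.cod ⟶ V) (α : p.v ≫ w₁ ⟶ q.v ≫ w₂) (β : p.u ≫ w₁ ⟶ q.u ≫ w₂) :
    HomotopyLL F p q w₁ w₂ α β ↔ (F.map w₁).toFunctor.map p.ξ ≫ squareApp F α y =
      squareApp F β x ≫ (F.map w₂).toFunctor.map q.ξ := by
  simp only [HomotopyLL, squareApp, Category.assoc]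

end

lemma HomotopyLL.compOver {F : Pseudofunctor 𝒜 Cat.{v₂, u₂}} {A B : 𝒜} {x : F.obj A} {y : F.obj B}
    {p₁ p₂ p₃ : Premor F A B x y} {V : 𝒜} {w₁ : p₁.cod ⟶ V} {w₂ : p₂.cod ⟶ V}
    {α : p₁.v ≫ w₁ ⟶ p₂.v ≫ w₂} {β : p₁.u ≫ w₁ ⟶ p₂.u ≫ w₂}
    (hll : HomotopyLL F p₁ p₂ w₁ w₂ α β) {V' : 𝒜} {w₂' : p₂.cod ⟶ V'} {w₃ : p₃.cod ⟶ V'}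
    {α' : p₂.v ≫ w₂' ⟶ p₃.v ≫ w₃} {β' : p₂.u ≫ w₂' ⟶ p₃.u ≫ w₃}
    (hll' : HomotopyLL F p₂ p₃ w₂' w₃ α' β') {H : 𝒜} (h : V ⟶ H) (h' : V' ⟶ H)
    (γ : w₂ ≫ h ⟶ w₂' ≫ h') :
    HomotopyLL F p₁ p₃ (w₁ ≫ h) (w₃ ≫ h') (compOver α α' γ) (compOver β β' γ) := by
  rw [homotopyLL_iff] at hll hll' ⊢
  simp only [squareApp_compOver, Category.assoc]
  rw [reassoc_of% mapComp_hom_naturality F w₁ h p₁.ξ,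
    ← Functor.map_comp_assoc, hll, Functor.map_comp_assoc,
    reassoc_of% squareApp_naturality F γ p₂.ξ,
    ← Functor.map_comp_assoc, hll', Functor.map_comp_assoc, mapComp_inv_naturality]

def compOverIso {X C₁ C₂ C₃ V V' H : 𝒜} {v₁ : X ⟶ C₁} {v₂ : X ⟶ C₂} {v₃ : X ⟶ C₃}
    {w₁ : C₁ ⟶ V} {w₂ : C₂ ⟶ V} {w₂' : C₂ ⟶ V'} {w₃ : C₃ ⟶ V'}
    (α : v₁ ≫ w₁ ≅ v₂ ≫ w₂) (α' : v₂ ≫ w₂' ≅ v₃ ≫ w₃)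
    {h : V ⟶ H} {h' : V' ⟶ H} (γ : w₂ ≫ h ≅ w₂' ≫ h') :
    v₁ ≫ (w₁ ≫ h) ≅ v₃ ≫ (w₃ ≫ h') :=
  (α_ v₁ w₁ h).symm ≪≫ whiskerRightIso α h ≪≫ α_ v₂ w₂ h ≪≫ whiskerLeftIso v₂ γ ≪≫
    (α_ v₂ w₂' h').symm ≪≫ whiskerRightIso α' h' ≪≫ α_ v₃ w₃ h'

section

variable {F : Pseudofunctor 𝒜 Cat.{v₂, u₂}} {A B : 𝒜} {x : F.obj A} {y : F.obj B}
  {p q r : Premor F A B x y}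

def Homotopy.comp (t : Homotopy F p q) (t' : Homotopy F q r) {H : 𝒜} (h : t.vertex ⟶ H)
    (h' : t'.vertex ⟶ H) (γ : t.w₂ ≫ h ≅ t'.w₁ ≫ h') : Homotopy F p r where
  vertex := H
  w₁ := t.w₁ ≫ h
  w₂ := t'.w₂ ≫ h'
  α := compOverIso t.α t'.α γ
  β := compOverIso t.β t'.β γ
  ll := t.ll.compOver t'.ll h h' γ.hom

theorem PreEquiv.trans (hF1 : AxiomF1 𝒜) (hpq : PreEquiv F p q) (hqr : PreEquiv F q r) :
    PreEquiv F p r := by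
  obtain ⟨t⟩ := hpq
  obtain ⟨t'⟩ := hqr
  obtain ⟨H, h, h', ⟨γ⟩⟩ := hF1 t.w₂ t'.w₁
  exact ⟨t.comp t' h h' γ⟩

end

theorem vertical_composition_of_homotopies_general
    (h1 : AxiomF1 𝒜)
    (F : Pseudofunctor 𝒜 Cat.{v₂, u₂}) {A B : 𝒜} {x : F.obj A} {y : F.obj B}
    (p₁ p₂ p₃ : Premor F A B x y)
    {V : 𝒜} (w₁ : p₁.cod ⟶ V) (w₂ : p₂.cod ⟶ V)
    (α : p₁.v ≫ w₁ ≅ p₂.v ≫ w₂) (β : p₁.u ≫ w₁ ≅ p₂.u ≫ w₂)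
    (hll : HomotopyLL F p₁ p₂ w₁ w₂ α.hom β.hom)
    {V' : 𝒜} (w₂' : p₂.cod ⟶ V') (w₃ : p₃.cod ⟶ V')
    (α' : p₂.v ≫ w₂' ≅ p₃.v ≫ w₃) (β' : p₂.u ≫ w₂' ≅ p₃.u ≫ w₃)
    (hll' : HomotopyLL F p₂ p₃ w₂' w₃ α'.hom β'.hom) :
    (∃ (H : 𝒜) (h : V ⟶ H) (h' : V' ⟶ H) (γ : w₂ ≫ h ≅ w₂' ≫ h'),
      HomotopyLL F p₁ p₃ (w₁ ≫ h) (w₃ ≫ h')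
        (compOver α.hom α'.hom γ.hom) (compOver β.hom β'.hom γ.hom)) ∧
    (∀ q₁ q₂ q₃ : Premor F A B x y,
      PreEquiv F q₁ q₂ → PreEquiv F q₂ q₃ → PreEquiv F q₁ q₃) := by
  refine ⟨?_, fun _ _ _ => PreEquiv.trans h1⟩
  obtain ⟨H, h, h', ⟨γ⟩⟩ := h1 w₂ w₂'
  exact ⟨H, h, h', γ, hll.compOver hll' h h' γ.hom⟩

/-- Vertical composition of homotopies : given homotopies `(w₁, w₂, α, β) : ξ₁ ⇒ ξ₂`
and `(w₂', w₃, α', β') : ξ₂ ⇒ ξ₃`, there are 1-cells `h`, `h'` and an invertible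
2-cell `γ : w₂ ≫ h ≅ w₂' ≫ h'` such that
`(w₁ ≫ h, w₃ ≫ h', α' ∘_γ α, β' ∘_γ β)` is a homotopy `ξ₁ ⇒ ξ₃`.
In particular, equivalence of premorphisms is transitive. -/
theorem vertical_composition_of_homotopies [Bicategory.Strict 𝒜]
    (h1 : AxiomF1 𝒜) (h2 : AxiomF2 𝒜)
    (F : Pseudofunctor 𝒜 Cat.{v₂, u₂}) {A B : 𝒜} {x : F.obj A} {y : F.obj B}
    (p₁ p₂ p₃ : Premor F A B x y)
    {V : 𝒜} (w₁ : p₁.cod ⟶ V) (w₂ : p₂.cod ⟶ V)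
    (α : p₁.v ≫ w₁ ≅ p₂.v ≫ w₂) (β : p₁.u ≫ w₁ ≅ p₂.u ≫ w₂)
    (hll : HomotopyLL F p₁ p₂ w₁ w₂ α.hom β.hom)
    {V' : 𝒜} (w₂' : p₂.cod ⟶ V') (w₃ : p₃.cod ⟶ V')
    (α' : p₂.v ≫ w₂' ≅ p₃.v ≫ w₃) (β' : p₂.u ≫ w₂' ≅ p₃.u ≫ w₃)
    (hll' : HomotopyLL F p₂ p₃ w₂' w₃ α'.hom β'.hom) :
    (∃ (H : 𝒜) (h : V ⟶ H) (h' : V' ⟶ H) (γ : w₂ ≫ h ≅ w₂' ≫ h'),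
      HomotopyLL F p₁ p₃ (w₁ ≫ h) (w₃ ≫ h')
        (compOver α.hom α'.hom γ.hom) (compOver β.hom β'.hom γ.hom)) ∧
    (∀ q₁ q₂ q₃ : Premor F A B x y,
      PreEquiv F q₁ q₂ → PreEquiv F q₂ q₃ → PreEquiv F q₁ q₃) :=
  vertical_composition_of_homotopies_general h1 F p₁ p₂ p₃ w₁ w₂ α β hll w₂' w₃ α' β' hll'

end DubucStreet
end

section
/- Let 𝒜 be a pre-2-filtered 2-category and F a pseudofunctor from 𝒜 to Cat. Let ξ₁, ξ₂ : (A, x) → (B, y) and ζ₁, ζ₂ : (B, y) → (C, z) be premorphisms, and suppose given homotopies (α, β) : ξ₁ ⇒ ξ₂ and (ε, δ) : ζ₁ ⇒ ζ₂. Then for any two composite premorphisms ζ₁ ∘_{γ₁} ξ₁ and ζ₂ ∘_{γ₂} ξ₂ (formed with respect to any invertible 2-cells γ₁, γ₂ provided by axiom F1), there exists a homotopy ζ₁ ∘_{γ₁} ξ₁ ⇒ ζ₂ ∘_{γ₂} ξ₂. Consequently, composition of premorphisms is, up to equivalence, independent of the choices of representatives and of the 2-cells used to compose them. -/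
open CategoryTheory Bicategory CategoryTheory.Limits

universe w₂ v₂ u₂ w v u p p' t s t' s' t₁ s₁ t₂ s₂

namespace DubucStreet

variable {𝒜 : Type u} [Bicategory.{w, v} 𝒜]

/-- The composite premorphism `ζ ∘_γ ξ = (u ≫ s, F(s)(ξ) ≫ F(γ)_y ≫ F(t)(ζ), k ≫ t)`. -/
def compPremor {F : Pseudofunctor 𝒜 Cat.{v₂, u₂}} {A B C : 𝒜}
    {x : F.obj A} {y : F.obj B} {z : F.obj C}
    (p : Premor F A B x y) (q : Premor F B C y z)
    {H : 𝒜} (s : p.cod ⟶ H) (t : q.cod ⟶ H) (γ : p.v ≫ s ⟶ q.u ≫ t) :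
    Premor F A C x z where
  cod := H
  u := p.u ≫ s
  v := q.v ≫ t
  ξ := (F.mapComp p.u s).hom.toNatTrans.app x ≫ (F.map s).toFunctor.map p.ξ ≫ (F.mapComp p.v s).inv.toNatTrans.app y ≫
    (F.map₂ γ).toNatTrans.app y ≫ (F.mapComp q.u t).hom.toNatTrans.app y ≫ (F.map t).toFunctor.map q.ξ ≫
    (F.mapComp q.v t).inv.toNatTrans.app z


/-!
Write the given homotopies as `(w₁, w₂, αp, βp) : ξ₁ ⇒ ξ₂` and `(r₁, r₂, αq, βq) : ζ₁ ⇒ ζ₂`.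
Two uses of F1 give `σ : w₂ ≫ m ≅ s₂ ≫ n` and `τ : r₂ ≫ o ≅ t₂ ≫ n ≫ e`. Pasting them with the
homotopy cells turns `γ₂` into a 2-cell `γ' : p₁.v ≫ (w₁ ≫ m ≫ e) ⟶ q₁.u ≫ (r₁ ≫ o)`, of the same
shape as `γ₁`, and F2 applied to `γ₁` and `γ'` yields `A : t₁ ≫ a ≅ (r₁ ≫ o) ≫ b` and
`B : s₁ ≫ a ≅ (w₁ ≫ m ≫ e) ≫ b`. Pasting once more gives the 2-cells of a homotopy with legs `a`
and `n ≫ e ≫ b`.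

Its LL equation in `F(V)` is a pasting of commutative squares `φ ≫ F(κ)_y = F(θ)_x ≫ ψ`:
naturality squares of `F` on whiskered 2-cells and on associators, the LL equations of the given
homotopies pushed forward along a 1-cell, and the image under `F` of the LL equation from F2.
-/

def pasteRight {E X₁ X₂ Y W Z : 𝒜} {ℓ₁ : E ⟶ X₁} {ℓ₂ : E ⟶ X₂} {w₁ : X₁ ⟶ Y} {w₂ : X₂ ⟶ Y}
    {c : Y ⟶ Z} {s : X₂ ⟶ W} {d : W ⟶ Z} (h : ℓ₁ ≫ w₁ ≅ ℓ₂ ≫ w₂) (ρ : w₂ ≫ c ≅ s ≫ d) :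
    ℓ₁ ≫ w₁ ≫ c ≅ (ℓ₂ ≫ s) ≫ d :=
  (α_ ℓ₁ w₁ c).symm ≪≫ whiskerRightIso h c ≪≫ α_ ℓ₂ w₂ c ≪≫ whiskerLeftIso ℓ₂ ρ ≪≫
    (α_ ℓ₂ s d).symm

def pasteLeft {E X H U V W : 𝒜} (ℓ : E ⟶ X) {s : X ⟶ H} {a : H ⟶ V} {U' : X ⟶ U} {b : U ⟶ V}
    {Y : E ⟶ W} {d : W ⟶ U} (B : s ≫ a ≅ U' ≫ b) (K : ℓ ≫ U' ≅ Y ≫ d) :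
    (ℓ ≫ s) ≫ a ≅ Y ≫ d ≫ b :=
  α_ ℓ s a ≪≫ whiskerLeftIso ℓ B ≪≫ (α_ ℓ U' b).symm ≪≫ whiskerRightIso K b ≪≫ α_ Y d b

lemma LLeq.whiskerRight_comp_pasteLeft {E X Y H C₂ V P : 𝒜} {f : E ⟶ X} {g : E ⟶ Y}
    {s : X ⟶ H} {t : Y ⟶ H} {U : X ⟶ C₂} {W : Y ⟶ C₂} {a : H ⟶ V} {b : C₂ ⟶ V}
    {γ : f ≫ s ⟶ g ≫ t} {Y₁ Y₂ : E ⟶ P} {d : P ⟶ C₂} {Kf : f ≫ U ≅ Y₁ ≫ d}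
    {Kg : g ≫ W ≅ Y₂ ≫ d} {μ : Y₁ ⟶ Y₂} {A : t ≫ a ≅ W ≫ b} {B : s ≫ a ≅ U ≫ b}
    (h : LLeq f g γ (Kf.hom ≫ μ ▷ d ≫ Kg.inv) a b A.hom B.hom) :
    γ ▷ a ≫ (pasteLeft g A Kg).hom = (pasteLeft f B Kf).hom ≫ μ ▷ (d ≫ b) := by
  unfold LLeq at h
  simp only [pasteLeft, Iso.trans_hom, Iso.symm_hom, whiskerLeftIso_hom, whiskerRightIso_hom,
    whiskerRight_comp, comp_whiskerRight, Category.assoc] at h ⊢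
  rw [← cancel_epi (α_ f s a).inv, reassoc_of% h]
  simp

section Squares

variable (F : Pseudofunctor 𝒜 Cat.{v₂, u₂})

def push {A B C V : 𝒜} {u : A ⟶ C} {v : B ⟶ C} {x : F.obj A} {y : F.obj B}
    (φ : (F.map u).toFunctor.obj x ⟶ (F.map v).toFunctor.obj y) (w : C ⟶ V) :
    (F.map (u ≫ w)).toFunctor.obj x ⟶ (F.map (v ≫ w)).toFunctor.obj y :=
  (F.mapComp u w).hom.toNatTrans.app x ≫ (F.map w).toFunctor.map φ ≫
    (F.mapComp v w).inv.toNatTrans.app y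

def Square {A B V : 𝒜} {u u' : A ⟶ V} {v v' : B ⟶ V} {x : F.obj A} {y : F.obj B}
    (θ : u ⟶ u') (κ : v ⟶ v') (φ : (F.map u).toFunctor.obj x ⟶ (F.map v).toFunctor.obj y)
    (ψ : (F.map u').toFunctor.obj x ⟶ (F.map v').toFunctor.obj y) : Prop :=
  φ ≫ (F.map₂ κ).toNatTrans.app y = (F.map₂ θ).toNatTrans.app x ≫ ψ

variable {F}

lemma push_comp {A B D C V : 𝒜} {u : A ⟶ C} {v : B ⟶ C} {k : D ⟶ C}
    {x : F.obj A} {y : F.obj B} {z : F.obj D}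
    (φ : (F.map u).toFunctor.obj x ⟶ (F.map v).toFunctor.obj y)
    (ψ : (F.map v).toFunctor.obj y ⟶ (F.map k).toFunctor.obj z) (w : C ⟶ V) :
    push F (φ ≫ ψ) w = push F φ w ≫ push F ψ w := by
  simp [push]

lemma push_map₂ {A C V : 𝒜} {u v : A ⟶ C} (θ : u ⟶ v) (x : F.obj A) (w : C ⟶ V) :
    push F ((F.map₂ θ).toNatTrans.app x) w = (F.map₂ (θ ▷ w)).toNatTrans.app x := by
  simp [push]

lemma square_map₂ {A V : 𝒜} {u u' v v' : A ⟶ V} {θ : u ⟶ u'} {κ : v ⟶ v'}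
    {μ : u ⟶ v} {μ' : u' ⟶ v'} (h : μ ≫ κ = θ ≫ μ') (x : F.obj A) :
    Square F θ κ ((F.map₂ μ).toNatTrans.app x) ((F.map₂ μ').toNatTrans.app x) := by
  simp only [Square, ← Cat.Hom₂.comp_app, ← PrelaxFunctor.map₂_comp, h]

lemma square_push_whiskerLeft {A B C V : 𝒜} {u : A ⟶ C} {v : B ⟶ C} {x : F.obj A} {y : F.obj B}
    (φ : (F.map u).toFunctor.obj x ⟶ (F.map v).toFunctor.obj y) {w w' : C ⟶ V} (θ : w ⟶ w') :
    Square F (u ◁ θ) (v ◁ θ) (push F φ w) (push F φ w') := by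
  simp [Square, push]

lemma square_push_push {A B C V V' : 𝒜} {u : A ⟶ C} {v : B ⟶ C} {x : F.obj A} {y : F.obj B}
    (φ : (F.map u).toFunctor.obj x ⟶ (F.map v).toFunctor.obj y) (w : C ⟶ V) (w' : V ⟶ V') :
    Square F (α_ u w w').hom (α_ v w w').hom (push F (push F φ w) w') (push F φ (w ≫ w')) := by
  simp only [Square, push, Pseudofunctor.map₂_associator, Cat.Hom₂.comp_app, Functor.map_comp,
    Category.assoc, Cat.Hom.inv_hom_id_toNatTrans_app_assoc, Cat.whiskerRight_app,
    Cat.whiskerLeft_app, Cat.associator_hom_app, eqToHom_refl, Category.id_comp]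
  have hnat := (F.mapComp w w').inv.toNatTrans.naturality φ
  rw [Cat.Hom.comp_map] at hnat
  rw [← Functor.map_comp_assoc (F.map w').toFunctor ((F.mapComp v w).inv.toNatTrans.app y),
    Cat.Hom.inv_hom_id_toNatTrans_app, CategoryTheory.Functor.map_id, Category.id_comp,
    reassoc_of% hnat]

namespace Square

variable {A B V : 𝒜} {x : F.obj A} {y : F.obj B}

lemma vcomp {u u' u'' : A ⟶ V} {v v' v'' : B ⟶ V} {θ : u ⟶ u'} {κ : v ⟶ v'}
    {θ' : u' ⟶ u''} {κ' : v' ⟶ v''}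
    {φ : (F.map u).toFunctor.obj x ⟶ (F.map v).toFunctor.obj y}
    {ψ : (F.map u').toFunctor.obj x ⟶ (F.map v').toFunctor.obj y}
    {χ : (F.map u'').toFunctor.obj x ⟶ (F.map v'').toFunctor.obj y}
    (h : Square F θ κ φ ψ) (h' : Square F θ' κ' ψ χ) : Square F (θ ≫ θ') (κ ≫ κ') φ χ := by
  simp only [Square, PrelaxFunctor.map₂_comp, Cat.Hom₂.comp_app] at *
  rw [reassoc_of% h, h', Category.assoc]

lemma hcomp {D : 𝒜} {z : F.obj D} {u u' : A ⟶ V} {v v' : B ⟶ V} {k k' : D ⟶ V}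
    {θ : u ⟶ u'} {κ : v ⟶ v'} {μ : k ⟶ k'}
    {φ : (F.map u).toFunctor.obj x ⟶ (F.map v).toFunctor.obj y}
    {φ' : (F.map u').toFunctor.obj x ⟶ (F.map v').toFunctor.obj y}
    {ψ : (F.map v).toFunctor.obj y ⟶ (F.map k).toFunctor.obj z}
    {ψ' : (F.map v').toFunctor.obj y ⟶ (F.map k').toFunctor.obj z}
    (h : Square F θ κ φ φ') (h' : Square F κ μ ψ ψ') : Square F θ μ (φ ≫ ψ) (φ' ≫ ψ') := by
  simp only [Square, Category.assoc] at *
  rw [h', reassoc_of% h]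

lemma symm {u u' : A ⟶ V} {v v' : B ⟶ V} {θ : u ≅ u'} {κ : v ≅ v'}
    {φ : (F.map u).toFunctor.obj x ⟶ (F.map v).toFunctor.obj y}
    {ψ : (F.map u').toFunctor.obj x ⟶ (F.map v').toFunctor.obj y}
    (h : Square F θ.hom κ.hom φ ψ) : Square F θ.inv κ.inv ψ φ := by
  have hθ : (F.map₂ θ.inv).toNatTrans.app x ≫ (F.map₂ θ.hom).toNatTrans.app x = 𝟙 _ := by
    simp [← Cat.Hom₂.comp_app]
  have hκ : (F.map₂ κ.hom).toNatTrans.app y ≫ (F.map₂ κ.inv).toNatTrans.app y = 𝟙 _ := by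
    simp [← Cat.Hom₂.comp_app]
  rw [Square, ← Category.id_comp ψ, ← hθ]
  simp only [Category.assoc]
  rw [← reassoc_of% h, hκ, Category.comp_id]

lemma whiskerRight {C : 𝒜} {u u' : A ⟶ C} {v v' : B ⟶ C} {θ : u ⟶ u'} {κ : v ⟶ v'}
    {φ : (F.map u).toFunctor.obj x ⟶ (F.map v).toFunctor.obj y}
    {ψ : (F.map u').toFunctor.obj x ⟶ (F.map v').toFunctor.obj y}
    (h : Square F θ κ φ ψ) (w : C ⟶ V) : Square F (θ ▷ w) (κ ▷ w) (push F φ w) (push F ψ w) := by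
  simp only [Square, DubucStreet.push, Pseudofunctor.map₂_whisker_right, Cat.Hom₂.comp_app,
    Cat.whiskerRight_app, Category.assoc, Cat.Hom.inv_hom_id_toNatTrans_app_assoc]
  rw [← Functor.map_comp_assoc, h, Functor.map_comp_assoc]

lemma pasteRight {C₁ C₂ W Z : 𝒜} {u₁ : A ⟶ C₁} {v₁ : B ⟶ C₁} {u₂ : A ⟶ C₂} {v₂ : B ⟶ C₂}
    {φ₁ : (F.map u₁).toFunctor.obj x ⟶ (F.map v₁).toFunctor.obj y}
    {φ₂ : (F.map u₂).toFunctor.obj x ⟶ (F.map v₂).toFunctor.obj y}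
    {w₁ : C₁ ⟶ V} {w₂ : C₂ ⟶ V} {hu : u₁ ≫ w₁ ≅ u₂ ≫ w₂} {hv : v₁ ≫ w₁ ≅ v₂ ≫ w₂}
    (h : Square F hu.hom hv.hom (push F φ₁ w₁) (push F φ₂ w₂))
    {c : V ⟶ Z} {s : C₂ ⟶ W} {d : W ⟶ Z} (ρ : w₂ ≫ c ≅ s ≫ d) :
    Square F (DubucStreet.pasteRight hu ρ).hom (DubucStreet.pasteRight hv ρ).hom
      (push F φ₁ (w₁ ≫ c)) (push F (push F φ₂ s) d) :=
  (square_push_push φ₁ w₁ c).symm.vcomp <| (h.whiskerRight c).vcomp <|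
    (square_push_push φ₂ w₂ c).vcomp <|
    (square_push_whiskerLeft φ₂ ρ.hom).vcomp (square_push_push φ₂ s d).symm

lemma pasteLeft {C D H W : 𝒜} {u : A ⟶ C} {v : B ⟶ C} {u' : A ⟶ D} {v' : B ⟶ D}
    {φ : (F.map u).toFunctor.obj x ⟶ (F.map v).toFunctor.obj y}
    {ψ : (F.map u').toFunctor.obj x ⟶ (F.map v').toFunctor.obj y}
    {U : C ⟶ W} {d : D ⟶ W} {Ku : u ≫ U ≅ u' ≫ d} {Kv : v ≫ U ≅ v' ≫ d}
    (h : Square F Ku.hom Kv.hom (push F φ U) (push F ψ d))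
    {s : C ⟶ H} {a : H ⟶ V} {b : W ⟶ V} (B : s ≫ a ≅ U ≫ b) :
    Square F (DubucStreet.pasteLeft u B Ku).hom (DubucStreet.pasteLeft v B Kv).hom
      (push F (push F φ s) a) (push F ψ (d ≫ b)) :=
  (square_push_push φ s a).vcomp <| (square_push_whiskerLeft φ B.hom).vcomp <|
    (square_push_push φ U b).symm.vcomp <| (h.whiskerRight b).vcomp (square_push_push ψ d b)

end Square

lemma compPremor_ξ {A B C : 𝒜} {x : F.obj A} {y : F.obj B} {z : F.obj C}
    (p : Premor F A B x y) (q : Premor F B C y z)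
    {H : 𝒜} (s : p.cod ⟶ H) (t : q.cod ⟶ H) (γ : p.v ≫ s ⟶ q.u ≫ t) :
    (compPremor p q s t γ).ξ = push F p.ξ s ≫ (F.map₂ γ).toNatTrans.app y ≫ push F q.ξ t := by
  simp only [compPremor, push, Category.assoc]
  rfl

lemma homotopyLL_iff_square {A B : 𝒜} {x : F.obj A} {y : F.obj B}
    (p q : Premor F A B x y) {V : 𝒜} (w₁ : p.cod ⟶ V) (w₂ : q.cod ⟶ V)
    (α : p.v ≫ w₁ ⟶ q.v ≫ w₂) (β : p.u ≫ w₁ ⟶ q.u ≫ w₂) :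
    HomotopyLL F p q w₁ w₂ α β ↔ Square F β α (push F p.ξ w₁) (push F q.ξ w₂) := by
  unfold HomotopyLL Square push
  constructor <;> intro h
  · rw [← cancel_mono ((F.mapComp q.v w₂).hom.toNatTrans.app y)]
    simp only [Category.assoc, Cat.Hom.inv_hom_id_toNatTrans_app]
    rw [h]
    simp
  · rw [← cancel_epi ((F.mapComp p.u w₁).hom.toNatTrans.app x),
      ← cancel_mono ((F.mapComp q.v w₂).inv.toNatTrans.app y)]
    simpa using h

lemma homotopyLL_compPremor_iff {A B C : 𝒜} {x : F.obj A} {y : F.obj B} {z : F.obj C}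
    {p₁ p₂ : Premor F A B x y} {q₁ q₂ : Premor F B C y z}
    {H₁ H₂ V : 𝒜} {s₁ : p₁.cod ⟶ H₁} {t₁ : q₁.cod ⟶ H₁} {s₂ : p₂.cod ⟶ H₂} {t₂ : q₂.cod ⟶ H₂}
    (γ₁ : p₁.v ≫ s₁ ⟶ q₁.u ≫ t₁) (γ₂ : p₂.v ≫ s₂ ⟶ q₂.u ≫ t₂) (w₁ : H₁ ⟶ V) (w₂ : H₂ ⟶ V)
    (α : (q₁.v ≫ t₁) ≫ w₁ ⟶ (q₂.v ≫ t₂) ≫ w₂) (β : (p₁.u ≫ s₁) ≫ w₁ ⟶ (p₂.u ≫ s₂) ≫ w₂) :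
    HomotopyLL F (compPremor p₁ q₁ s₁ t₁ γ₁) (compPremor p₂ q₂ s₂ t₂ γ₂) w₁ w₂ α β ↔
      Square F β α
        (push F (push F p₁.ξ s₁) w₁ ≫ (F.map₂ (γ₁ ▷ w₁)).toNatTrans.app y ≫
          push F (push F q₁.ξ t₁) w₁)
        (push F (push F p₂.ξ s₂) w₂ ≫ (F.map₂ (γ₂ ▷ w₂)).toNatTrans.app y ≫
          push F (push F q₂.ξ t₂) w₂) := by
  -- Without this `show` the codomain is `(compPremor …).cod` rather than `H₁`, and the
  -- rewrites below produce ill-typed motives.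
  show HomotopyLL F ⟨H₁, p₁.u ≫ s₁, q₁.v ≫ t₁, (compPremor p₁ q₁ s₁ t₁ γ₁).ξ⟩
    ⟨H₂, p₂.u ≫ s₂, q₂.v ≫ t₂, (compPremor p₂ q₂ s₂ t₂ γ₂).ξ⟩ w₁ w₂ α β ↔ _
  rw [homotopyLL_iff_square, compPremor_ξ, compPremor_ξ, push_comp, push_comp, push_comp,
    push_comp, push_map₂, push_map₂]

end Squares

theorem horizontal_composition_of_homotopies_general
    (h1 : AxiomF1 𝒜) (h2 : AxiomF2 𝒜)
    (F : Pseudofunctor 𝒜 Cat.{v₂, u₂}) {A B C : 𝒜}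
    {x : F.obj A} {y : F.obj B} {z : F.obj C}
    (p₁ p₂ : Premor F A B x y) (q₁ q₂ : Premor F B C y z)
    (hp : Homotopy F p₁ p₂) (hq : Homotopy F q₁ q₂)
    {H₁ : 𝒜} (s₁ : p₁.cod ⟶ H₁) (t₁ : q₁.cod ⟶ H₁) (γ₁ : p₁.v ≫ s₁ ≅ q₁.u ≫ t₁)
    {H₂ : 𝒜} (s₂ : p₂.cod ⟶ H₂) (t₂ : q₂.cod ⟶ H₂) (γ₂ : p₂.v ≫ s₂ ≅ q₂.u ≫ t₂) :
    PreEquiv F (compPremor p₁ q₁ s₁ t₁ γ₁.hom) (compPremor p₂ q₂ s₂ t₂ γ₂.hom) := by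
  obtain ⟨_, w₁, w₂, αp, βp, hpLL⟩ := hp
  obtain ⟨_, r₁, r₂, αq, βq, hqLL⟩ := hq
  obtain ⟨_, m, n, ⟨σ⟩⟩ := h1 w₂ s₂
  obtain ⟨_, o, e, ⟨τ⟩⟩ := h1 r₂ (t₂ ≫ n)
  let ρp := (α_ w₂ m e).symm ≪≫ whiskerRightIso σ e ≪≫ α_ s₂ n e
  let ρq := τ ≪≫ α_ t₂ n e
  obtain ⟨V, a, b, A', B', hLL⟩ :=
    h2 γ₁.hom ((pasteRight αp ρp).hom ≫ γ₂.hom ▷ (n ≫ e) ≫ (pasteRight βq ρq).inv)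
  refine ⟨⟨V, a, (n ≫ e) ≫ b, pasteLeft q₁.v A' (pasteRight αq ρq),
    pasteLeft p₁.u B' (pasteRight βp ρp), ?_⟩⟩
  rw [homotopyLL_iff_square] at hpLL hqLL
  refine (homotopyLL_compPremor_iff _ _ _ _ _ _).mpr ?_
  exact ((hpLL.pasteRight ρp).pasteLeft B').hcomp <|
    (square_map₂ hLL.whiskerRight_comp_pasteLeft y).hcomp ((hqLL.pasteRight ρq).pasteLeft A')

/-- Horizontal composition of homotopies : given homotopies `ξ₁ ⇒ ξ₂` and `ζ₁ ⇒ ζ₂`,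
any two composites `ζ₁ ∘_{γ₁} ξ₁` and `ζ₂ ∘_{γ₂} ξ₂` are homotopic. Consequently,
composition of premorphisms is, up to equivalence, independent of the choices of
representatives and of the 2-cells used to compose them. -/
theorem horizontal_composition_of_homotopies [Bicategory.Strict 𝒜]
    (h1 : AxiomF1 𝒜) (h2 : AxiomF2 𝒜)
    (F : Pseudofunctor 𝒜 Cat.{v₂, u₂}) {A B C : 𝒜}
    {x : F.obj A} {y : F.obj B} {z : F.obj C}
    (p₁ p₂ : Premor F A B x y) (q₁ q₂ : Premor F B C y z)
    (hp : Homotopy F p₁ p₂) (hq : Homotopy F q₁ q₂)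
    {H₁ : 𝒜} (s₁ : p₁.cod ⟶ H₁) (t₁ : q₁.cod ⟶ H₁) (γ₁ : p₁.v ≫ s₁ ≅ q₁.u ≫ t₁)
    {H₂ : 𝒜} (s₂ : p₂.cod ⟶ H₂) (t₂ : q₂.cod ⟶ H₂) (γ₂ : p₂.v ≫ s₂ ≅ q₂.u ≫ t₂) :
    PreEquiv F (compPremor p₁ q₁ s₁ t₁ γ₁.hom) (compPremor p₂ q₂ s₂ t₂ γ₂.hom) :=
  horizontal_composition_of_homotopies_general h1 h2 F p₁ p₂ q₁ q₂ hp hq s₁ t₁ γ₁ s₂ t₂ γ₂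

end DubucStreet
end

section
/- Let 𝒜 be a pre-2-filtered 2-category and F a pseudofunctor from 𝒜 to Cat. Given 2-cells γ₁ : f ≫ u₁ ⟹ g ≫ v₁ and γ₂ : f ≫ u₂ ⟹ g ≫ v₂ (with f : E ⟶ A, g : E ⟶ B, uᵢ : A ⟶ Cᵢ, vᵢ : B ⟶ Cᵢ) and an object x of F(E), the premorphisms (u₁, F(γ₁)ₓ, v₁) and (u₂, F(γ₂)ₓ, v₂) from (A, F(f)(x)) to (B, F(g)(x)) are equivalent, where F(γᵢ)ₓ denotes the component at x of F applied to γᵢ, regarded (via the compositor isomorphisms of F) as a morphism F(uᵢ)(F(f)(x)) ⟶ F(vᵢ)(F(g)(x)) in F(Cᵢ). -/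
open CategoryTheory Bicategory CategoryTheory.Limits

universe w₂ v₂ u₂ w v u p p' t s t' s' t₁ s₁ t₂ s₂

namespace DubucStreet

variable {𝒜 : Type u} [Bicategory.{w, v} 𝒜]

/-! Applying `F` to the LL equation of an `AxiomF2` homotopy for `γ₁, γ₂` and evaluating at `x`
yields, once `F` of the whiskerings and associators is expanded through the compositors of `F`,
the LL equation for a homotopy between the induced premorphisms: the compositors left over at
the two ends are isomorphisms and cancel. -/

lemma _root_.CategoryTheory.Pseudofunctor.map₂_associator_inv_app
    {ℬ : Type*} [Bicategory ℬ] (F : Pseudofunctor ℬ Cat.{v₂, u₂}) {a b c d : ℬ}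
    (f : a ⟶ b) (g : b ⟶ c) (h : c ⟶ d) (X : F.obj a) :
    (F.map₂ (α_ f g h).inv).toNatTrans.app X =
      (F.mapComp f (g ≫ h)).hom.toNatTrans.app X ≫
        (F.mapComp g h).hom.toNatTrans.app ((F.map f).toFunctor.obj X) ≫
          (F.map h).toFunctor.map ((F.mapComp f g).inv.toNatTrans.app X) ≫
            (F.mapComp (f ≫ g) h).inv.toNatTrans.app X := by
  rw [F.mapComp_assoc_right_hom_app_assoc, ← Functor.map_comp_assoc]
  simp

def Premor.ofTwoCell (F : Pseudofunctor 𝒜 Cat.{v₂, u₂}) {E A B C : 𝒜} {f : E ⟶ A} {g : E ⟶ B}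
    {u : A ⟶ C} {v : B ⟶ C} (γ : f ≫ u ⟶ g ≫ v) (x : F.obj E) :
    Premor F A B ((F.map f).toFunctor.obj x) ((F.map g).toFunctor.obj x) :=
  ⟨C, u, v, (F.mapComp f u).inv.toNatTrans.app x ≫ (F.map₂ γ).toNatTrans.app x ≫
    (F.mapComp g v).hom.toNatTrans.app x⟩

lemma homotopyLL_ofTwoCell_of_LLeq (F : Pseudofunctor 𝒜 Cat.{v₂, u₂}) {E A B C₁ C₂ C : 𝒜}
    {f : E ⟶ A} {g : E ⟶ B} {u₁ : A ⟶ C₁} {v₁ : B ⟶ C₁} {u₂ : A ⟶ C₂} {v₂ : B ⟶ C₂}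
    {γ₁ : f ≫ u₁ ⟶ g ≫ v₁} {γ₂ : f ≫ u₂ ⟶ g ≫ v₂} {w₁ : C₁ ⟶ C} {w₂ : C₂ ⟶ C}
    {α : v₁ ≫ w₁ ⟶ v₂ ≫ w₂} {β : u₁ ≫ w₁ ⟶ u₂ ≫ w₂} (hLL : LLeq f g γ₁ γ₂ w₁ w₂ α β)
    (x : F.obj E) :
    HomotopyLL F (Premor.ofTwoCell F γ₁ x) (Premor.ofTwoCell F γ₂ x) w₁ w₂ α β := by
  have h := congrArg (fun η => (F.map₂ η).toNatTrans.app x) hLL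
  simp only [PrelaxFunctor.map₂_comp, Cat.Hom₂.comp_app, Pseudofunctor.map₂_whisker_left_app,
    Pseudofunctor.map₂_whisker_right_app, Pseudofunctor.map₂_associator_app,
    Pseudofunctor.map₂_associator_inv_app, Category.assoc,
    Cat.Hom.inv_hom_id_toNatTrans_app_assoc] at h
  simp only [← Category.assoc, cancel_mono] at h
  simp only [Category.assoc, cancel_epi] at h
  dsimp only [HomotopyLL, Premor.ofTwoCell]
  rw [← cancel_epi ((F.mapComp u₁ w₁).hom.toNatTrans.app _),
    ← cancel_mono ((F.mapComp v₂ w₂).inv.toNatTrans.app _)]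
  simpa only [Cat.Hom.comp_toFunctor, Functor.comp_obj, Functor.map_comp, Category.assoc,
    Cat.Hom.hom_inv_id_toNatTrans_app, Cat.Hom.hom_inv_id_toNatTrans_app_assoc,
    Category.comp_id] using h

theorem premorphisms_from_2cells_equivalent_general (h2 : AxiomF2 𝒜)
    (F : Pseudofunctor 𝒜 Cat.{v₂, u₂}) {E A B C₁ C₂ : 𝒜} (f : E ⟶ A) (g : E ⟶ B)
    (u₁ : A ⟶ C₁) (v₁ : B ⟶ C₁) (u₂ : A ⟶ C₂) (v₂ : B ⟶ C₂)
    (γ₁ : f ≫ u₁ ⟶ g ≫ v₁) (γ₂ : f ≫ u₂ ⟶ g ≫ v₂) (x : F.obj E) :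
    PreEquiv F
      (⟨C₁, u₁, v₁,
        (F.mapComp f u₁).inv.toNatTrans.app x ≫ (F.map₂ γ₁).toNatTrans.app x ≫ (F.mapComp g v₁).hom.toNatTrans.app x⟩ :
        Premor F A B ((F.map f).toFunctor.obj x) ((F.map g).toFunctor.obj x))
      (⟨C₂, u₂, v₂,
        (F.mapComp f u₂).inv.toNatTrans.app x ≫ (F.map₂ γ₂).toNatTrans.app x ≫ (F.mapComp g v₂).hom.toNatTrans.app x⟩ :
        Premor F A B ((F.map f).toFunctor.obj x) ((F.map g).toFunctor.obj x)) := by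
  obtain ⟨C, w₁, w₂, α, β, hLL⟩ := h2 γ₁ γ₂
  exact ⟨⟨C, w₁, w₂, α, β, homotopyLL_ofTwoCell_of_LLeq F hLL x⟩⟩

/-- Given 2-cells `γ₁ : f ≫ u₁ ⟹ g ≫ v₁` and `γ₂ : f ≫ u₂ ⟹ g ≫ v₂` and an object
`x` of `F(E)`, the premorphisms `(u₁, F(γ₁)ₓ, v₁)` and `(u₂, F(γ₂)ₓ, v₂)` from
`(A, F(f)(x))` to `(B, F(g)(x))` are equivalent. -/
theorem premorphisms_from_2cells_equivalent [Bicategory.Strict 𝒜]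
    (h1 : AxiomF1 𝒜) (h2 : AxiomF2 𝒜)
    (F : Pseudofunctor 𝒜 Cat.{v₂, u₂}) {E A B C₁ C₂ : 𝒜} (f : E ⟶ A) (g : E ⟶ B)
    (u₁ : A ⟶ C₁) (v₁ : B ⟶ C₁) (u₂ : A ⟶ C₂) (v₂ : B ⟶ C₂)
    (γ₁ : f ≫ u₁ ⟶ g ≫ v₁) (γ₂ : f ≫ u₂ ⟶ g ≫ v₂) (x : F.obj E) :
    PreEquiv F
      (⟨C₁, u₁, v₁,
        (F.mapComp f u₁).inv.toNatTrans.app x ≫ (F.map₂ γ₁).toNatTrans.app x ≫ (F.mapComp g v₁).hom.toNatTrans.app x⟩ :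
        Premor F A B ((F.map f).toFunctor.obj x) ((F.map g).toFunctor.obj x))
      (⟨C₂, u₂, v₂,
        (F.mapComp f u₂).inv.toNatTrans.app x ≫ (F.map₂ γ₂).toNatTrans.app x ≫ (F.mapComp g v₂).hom.toNatTrans.app x⟩ :
        Premor F A B ((F.map f).toFunctor.obj x) ((F.map g).toFunctor.obj x)) :=
  premorphisms_from_2cells_equivalent_general h2 F f g u₁ v₁ u₂ v₂ γ₁ γ₂ x

end DubucStreet
end

section
/- Let 𝒜 be a pre-2-filtered 2-category and F a pseudofunctor from 𝒜 to Cat. Let (u₁, ξ₁, v₁) and (u₂, ξ₂, v₂) be premorphisms (A, x) → (B, y) with codomains C₁, C₂, and let w₁ : C₁ ⟶ C, w₂ : C₂ ⟶ C be 1-cells with invertible 2-cells α : v₁ ≫ w₁ ⟹ v₂ ≫ w₂ and β : u₁ ≫ w₁ ⟹ u₂ ≫ w₂. Then: (i) (u₁, ξ₁, v₁) is equivalent to the premorphism (u₁ ≫ w₁, F(w₁)(ξ₁) ≫ F(α)_y, v₂ ≫ w₂); (ii) the premorphism (u₁ ≫ w₁, F(β)ₓ ≫ F(w₂)(ξ₂),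 v₂ ≫ w₂) is equivalent to (u₂, ξ₂, v₂); and (iii) if α and β satisfy the LL equation F(w₁)(ξ₁) ≫ F(α)_y = F(β)ₓ ≫ F(w₂)(ξ₂), then (u₁, ξ₁, v₁) is equivalent to (u₂, ξ₂, v₂). -/
open CategoryTheory Bicategory CategoryTheory.Limits

universe w₂ v₂ u₂ w v u p p' t s t' s' t₁ s₁ t₂ s₂

namespace DubucStreet

variable {𝒜 : Type u} [Bicategory.{w, v} 𝒜]

/-!
A premorphism is homotopic to its transport along a 1-cell `w` out of its codomain: take `w` on
one side and the identity on the other, with right unitors as the 2-cells. The LL equation of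
this homotopy reduces, through the description of `F.mapComp f (𝟙 _)` by the unitors of `F`, to
naturality of `F.mapId`.
-/

section

variable {F : Pseudofunctor 𝒜 Cat.{v₂, u₂}} {A B : 𝒜} {x : F.obj A} {y : F.obj B}

lemma map₂_inv_hom_app_assoc {a b : 𝒜} {f g : a ⟶ b} (η : f ≅ g) (z : F.obj a)
    {c : F.obj b} (k : (F.map g).toFunctor.obj z ⟶ c) :
    (F.map₂ η.inv).toNatTrans.app z ≫ (F.map₂ η.hom).toNatTrans.app z ≫ k = k := by
  rw [← Category.assoc, ← Cat.Hom₂.comp_app, F.map₂_inv_hom, Cat.Hom₂.id_app, Category.id_comp]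

lemma mapId_inv_naturality (c : 𝒜) {a b : F.obj c} (h : a ⟶ b) :
    (F.mapId c).inv.toNatTrans.app a ≫ (F.map (𝟙 c)).toFunctor.map h =
      h ≫ (F.mapId c).inv.toNatTrans.app b :=
  ((F.mapId c).inv.toNatTrans.naturality h).symm

lemma mapId_hom_naturality_assoc (c : 𝒜) {a b d : F.obj c} (h : a ⟶ b) (k : b ⟶ d) :
    (F.map (𝟙 c)).toFunctor.map h ≫ (F.mapId c).hom.toNatTrans.app b ≫ k =
      (F.mapId c).hom.toNatTrans.app a ≫ h ≫ k := by
  rw [← Category.assoc, (F.mapId c).hom.toNatTrans.naturality h, Category.assoc]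
  rfl

theorem preEquiv_whiskerRight (p : Premor F A B x y) {C : 𝒜} (w : p.cod ⟶ C) {v : B ⟶ C}
    (α : p.v ≫ w ≅ v) :
    PreEquiv F p ⟨C, p.u ≫ w, v,
      (F.mapComp p.u w).hom.toNatTrans.app x ≫ (F.map w).toFunctor.map p.ξ ≫
        (F.mapComp p.v w).inv.toNatTrans.app y ≫ (F.map₂ α.hom).toNatTrans.app y⟩ := by
  refine ⟨⟨C, w, 𝟙 C, α ≪≫ (ρ_ v).symm, (ρ_ _).symm, ?_⟩⟩
  simp only [HomotopyLL, Iso.trans_hom, Iso.symm_hom, PrelaxFunctor.map₂_comp, Cat.Hom₂.comp_app,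
    Pseudofunctor.mapComp_id_right_hom_app, Category.assoc, map₂_inv_hom_app_assoc]
  rw [mapId_inv_naturality]
  simp only [Category.assoc, Cat.Hom.inv_hom_id_toNatTrans_app_assoc]

theorem whiskerRight_preEquiv (q : Premor F A B x y) {C : 𝒜} (w : q.cod ⟶ C) {u : A ⟶ C}
    (β : u ≅ q.u ≫ w) :
    PreEquiv F ⟨C, u, q.v ≫ w,
      (F.map₂ β.hom).toNatTrans.app x ≫ (F.mapComp q.u w).hom.toNatTrans.app x ≫
        (F.map w).toFunctor.map q.ξ ≫ (F.mapComp q.v w).inv.toNatTrans.app y⟩ q := by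
  refine ⟨⟨C, 𝟙 C, w, ρ_ _, ρ_ u ≪≫ β, ?_⟩⟩
  simp only [HomotopyLL, Iso.trans_hom, PrelaxFunctor.map₂_comp, Cat.Hom₂.comp_app,
    Pseudofunctor.mapComp_id_right_inv_app, Category.assoc, map₂_inv_hom_app_assoc]
  rw [mapId_hom_naturality_assoc]
  simp only [Category.assoc, Cat.Hom.inv_hom_id_toNatTrans_app, Cat.Hom.comp_toFunctor,
    Functor.comp_obj, Category.comp_id]

end

theorem basic_equivalences_general
    (F : Pseudofunctor 𝒜 Cat.{v₂, u₂}) {A B : 𝒜} {x : F.obj A} {y : F.obj B}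
    {C₁ C₂ C : 𝒜} (u₁ : A ⟶ C₁) (v₁ : B ⟶ C₁)
    (ξ₁ : (F.map u₁).toFunctor.obj x ⟶ (F.map v₁).toFunctor.obj y)
    (u₂ : A ⟶ C₂) (v₂ : B ⟶ C₂) (ξ₂ : (F.map u₂).toFunctor.obj x ⟶ (F.map v₂).toFunctor.obj y)
    (w₁ : C₁ ⟶ C) (w₂ : C₂ ⟶ C) (α : v₁ ≫ w₁ ≅ v₂ ≫ w₂) (β : u₁ ≫ w₁ ≅ u₂ ≫ w₂) :
    PreEquiv F (⟨C₁, u₁, v₁, ξ₁⟩ : Premor F A B x y)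
      (⟨C, u₁ ≫ w₁, v₂ ≫ w₂,
        (F.mapComp u₁ w₁).hom.toNatTrans.app x ≫ (F.map w₁).toFunctor.map ξ₁ ≫
          (F.mapComp v₁ w₁).inv.toNatTrans.app y ≫ (F.map₂ α.hom).toNatTrans.app y⟩ : Premor F A B x y) ∧
    PreEquiv F
      (⟨C, u₁ ≫ w₁, v₂ ≫ w₂,
        (F.map₂ β.hom).toNatTrans.app x ≫ (F.mapComp u₂ w₂).hom.toNatTrans.app x ≫
          (F.map w₂).toFunctor.map ξ₂ ≫ (F.mapComp v₂ w₂).inv.toNatTrans.app y⟩ : Premor F A B x y)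
      (⟨C₂, u₂, v₂, ξ₂⟩ : Premor F A B x y) ∧
    (HomotopyLL F (⟨C₁, u₁, v₁, ξ₁⟩ : Premor F A B x y)
        (⟨C₂, u₂, v₂, ξ₂⟩ : Premor F A B x y) w₁ w₂ α.hom β.hom →
      PreEquiv F (⟨C₁, u₁, v₁, ξ₁⟩ : Premor F A B x y)
        (⟨C₂, u₂, v₂, ξ₂⟩ : Premor F A B x y)) :=
  ⟨preEquiv_whiskerRight ⟨C₁, u₁, v₁, ξ₁⟩ w₁ α, whiskerRight_preEquiv ⟨C₂, u₂, v₂, ξ₂⟩ w₂ β,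
    fun hLL => ⟨⟨C, w₁, w₂, α, β, hLL⟩⟩⟩

/-- Lemma on basic equivalences : (i) `(u₁, ξ₁, v₁)` is equivalent to
`(u₁ ≫ w₁, F(w₁)(ξ₁) ≫ F(α)_y, v₂ ≫ w₂)`; (ii) `(u₁ ≫ w₁, F(β)ₓ ≫ F(w₂)(ξ₂), v₂ ≫ w₂)`
is equivalent to `(u₂, ξ₂, v₂)`; and (iii) when `(α, β)` satisfies the LL equation,
`(u₁, ξ₁, v₁)` is equivalent to `(u₂, ξ₂, v₂)`. -/
theorem basic_equivalences [Bicategory.Strict 𝒜]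
    (h1 : AxiomF1 𝒜) (h2 : AxiomF2 𝒜)
    (F : Pseudofunctor 𝒜 Cat.{v₂, u₂}) {A B : 𝒜} {x : F.obj A} {y : F.obj B}
    {C₁ C₂ C : 𝒜} (u₁ : A ⟶ C₁) (v₁ : B ⟶ C₁)
    (ξ₁ : (F.map u₁).toFunctor.obj x ⟶ (F.map v₁).toFunctor.obj y)
    (u₂ : A ⟶ C₂) (v₂ : B ⟶ C₂) (ξ₂ : (F.map u₂).toFunctor.obj x ⟶ (F.map v₂).toFunctor.obj y)
    (w₁ : C₁ ⟶ C) (w₂ : C₂ ⟶ C) (α : v₁ ≫ w₁ ≅ v₂ ≫ w₂) (β : u₁ ≫ w₁ ≅ u₂ ≫ w₂) :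
    PreEquiv F (⟨C₁, u₁, v₁, ξ₁⟩ : Premor F A B x y)
      (⟨C, u₁ ≫ w₁, v₂ ≫ w₂,
        (F.mapComp u₁ w₁).hom.toNatTrans.app x ≫ (F.map w₁).toFunctor.map ξ₁ ≫
          (F.mapComp v₁ w₁).inv.toNatTrans.app y ≫ (F.map₂ α.hom).toNatTrans.app y⟩ : Premor F A B x y) ∧
    PreEquiv F
      (⟨C, u₁ ≫ w₁, v₂ ≫ w₂,
        (F.map₂ β.hom).toNatTrans.app x ≫ (F.mapComp u₂ w₂).hom.toNatTrans.app x ≫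
          (F.map w₂).toFunctor.map ξ₂ ≫ (F.mapComp v₂ w₂).inv.toNatTrans.app y⟩ : Premor F A B x y)
      (⟨C₂, u₂, v₂, ξ₂⟩ : Premor F A B x y) ∧
    (HomotopyLL F (⟨C₁, u₁, v₁, ξ₁⟩ : Premor F A B x y)
        (⟨C₂, u₂, v₂, ξ₂⟩ : Premor F A B x y) w₁ w₂ α.hom β.hom →
      PreEquiv F (⟨C₁, u₁, v₁, ξ₁⟩ : Premor F A B x y)
        (⟨C₂, u₂, v₂, ξ₂⟩ : Premor F A B x y)) :=
  basic_equivalences_general F u₁ v₁ ξ₁ u₂ v₂ ξ₂ w₁ w₂ α β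

end DubucStreet
end

section
/- Let 𝒜 be a pre-2-filtered 2-category and F a pseudofunctor from 𝒜 to Cat. Let (u, ξ, v) : (A, x) → (B, y) be a premorphism with codomain C, and let w : C ⟶ D, s : A ⟶ D, t : B ⟶ D be 1-cells with invertible 2-cells α : s ⟹ u ≫ w and β : v ≫ w ⟹ t. Then (u, ξ, v) is equivalent to the premorphism (s, F(α)ₓ ≫ F(w)(ξ) ≫ F(β)_y, t) : (A, x) → (B, y). -/
/-!
The homotopy is `(w, 𝟙_D, β ≫ ρ⁻¹, α⁻¹ ≫ ρ⁻¹)`. Since its second leg is an identity, the unit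
constraint `F(𝟙_D) ≅ 𝟙` appears on both sides of the LL equation and cancels by naturality; what
remains says exactly that the new morphism is `F(α)ₓ ≫ F(w)(ξ) ≫ F(β)_y` up to the cancelling
`F(α⁻¹)ₓ ≫ F(α)ₓ`.
-/

open CategoryTheory Bicategory CategoryTheory.Limits

universe w₂ v₂ u₂ w v u p p' t s t' s' t₁ s₁ t₂ s₂

namespace DubucStreet

variable {𝒜 : Type u} [Bicategory.{w, v} 𝒜]

lemma map₂_rightUnitor_inv_app_mapComp_id_right_hom_app (F : Pseudofunctor 𝒜 Cat.{v₂, u₂})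
    {a b : 𝒜} (f : a ⟶ b) (X : F.obj a) :
    (F.map₂ (ρ_ f).inv).toNatTrans.app X ≫ (F.mapComp f (𝟙 b)).hom.toNatTrans.app X =
      (F.mapId b).inv.toNatTrans.app ((F.map f).toFunctor.obj X) := by
  rw [Pseudofunctor.mapComp_id_right_hom_app, ← Cat.Hom₂.comp_app_assoc,
    PrelaxFunctor.map₂_inv_hom]
  exact Category.id_comp _

lemma homotopyLL_id_right_iff (F : Pseudofunctor 𝒜 Cat.{v₂, u₂}) {A B : 𝒜} {x : F.obj A}
    {y : F.obj B} (p q : Premor F A B x y) (w : p.cod ⟶ q.cod) (α : p.v ≫ w ⟶ q.v)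
    (β : p.u ≫ w ⟶ q.u) :
    HomotopyLL F p q w (𝟙 q.cod) (α ≫ (ρ_ q.v).inv) (β ≫ (ρ_ q.u).inv) ↔
      (F.map w).toFunctor.map p.ξ ≫ (F.mapComp p.v w).inv.toNatTrans.app y ≫
          (F.map₂ α).toNatTrans.app y =
        (F.mapComp p.u w).inv.toNatTrans.app x ≫ (F.map₂ β).toNatTrans.app x ≫ q.ξ := by
  simp only [HomotopyLL, PrelaxFunctor.map₂_comp, Cat.Hom₂.comp_app, Category.assoc,
    map₂_rightUnitor_inv_app_mapComp_id_right_hom_app,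
    reassoc_of% map₂_rightUnitor_inv_app_mapComp_id_right_hom_app,
    ← (F.mapId q.cod).inv.toNatTrans.naturality, Cat.Hom.id_map]
  simp only [← Category.assoc, cancel_mono]

lemma preEquiv_of_pushforward (F : Pseudofunctor 𝒜 Cat.{v₂, u₂}) {A B : 𝒜} {x : F.obj A}
    {y : F.obj B} (p q : Premor F A B x y) (w : p.cod ⟶ q.cod) (α : p.v ≫ w ≅ q.v)
    (β : p.u ≫ w ≅ q.u)
    (h : (F.map w).toFunctor.map p.ξ ≫ (F.mapComp p.v w).inv.toNatTrans.app y ≫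
          (F.map₂ α.hom).toNatTrans.app y =
        (F.mapComp p.u w).inv.toNatTrans.app x ≫ (F.map₂ β.hom).toNatTrans.app x ≫ q.ξ) :
    PreEquiv F p q :=
  ⟨⟨q.cod, w, 𝟙 q.cod, α ≪≫ (ρ_ q.v).symm, β ≪≫ (ρ_ q.u).symm,
    (homotopyLL_id_right_iff F p q w α.hom β.hom).2 h⟩⟩

theorem premorphism_pushed_further_general
    (F : Pseudofunctor 𝒜 Cat.{v₂, u₂}) {A B : 𝒜} {x : F.obj A} {y : F.obj B}
    (p : Premor F A B x y) {D : 𝒜} (w : p.cod ⟶ D) (s : A ⟶ D) (t : B ⟶ D)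
    (α : s ≅ p.u ≫ w) (β : p.v ≫ w ≅ t) :
    PreEquiv F p
      (⟨D, s, t,
        (F.map₂ α.hom).toNatTrans.app x ≫ (F.mapComp p.u w).hom.toNatTrans.app x ≫ (F.map w).toFunctor.map p.ξ ≫
          (F.mapComp p.v w).inv.toNatTrans.app y ≫ (F.map₂ β.hom).toNatTrans.app y⟩ : Premor F A B x y) := by
  refine preEquiv_of_pushforward F p _ w β α.symm ?_
  simp only [Iso.symm_hom, ← Cat.Hom₂.comp_app_assoc, PrelaxFunctor.map₂_inv_hom_assoc,
    Iso.inv_hom_id, Cat.Hom₂.id_app, Category.id_comp]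

/-- A premorphism `(u, ξ, v)` is equivalent to the premorphism
`(s, F(α)ₓ ≫ F(w)(ξ) ≫ F(β)_y, t)` obtained by pushing it further along `w` via the
invertible 2-cells `α : s ⟹ u ≫ w` and `β : v ≫ w ⟹ t`. -/
theorem premorphism_pushed_further [Bicategory.Strict 𝒜]
    (h1 : AxiomF1 𝒜) (h2 : AxiomF2 𝒜)
    (F : Pseudofunctor 𝒜 Cat.{v₂, u₂}) {A B : 𝒜} {x : F.obj A} {y : F.obj B}
    (p : Premor F A B x y) {D : 𝒜} (w : p.cod ⟶ D) (s : A ⟶ D) (t : B ⟶ D)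
    (α : s ≅ p.u ≫ w) (β : p.v ≫ w ≅ t) :
    PreEquiv F p
      (⟨D, s, t,
        (F.map₂ α.hom).toNatTrans.app x ≫ (F.mapComp p.u w).hom.toNatTrans.app x ≫ (F.map w).toFunctor.map p.ξ ≫
          (F.mapComp p.v w).inv.toNatTrans.app y ≫ (F.map₂ β.hom).toNatTrans.app y⟩ : Premor F A B x y) :=
  premorphism_pushed_further_general F p w s t α β

end DubucStreet
end

section
/- Let 𝒜 be a pseudo 2-filtered 2-category and F a pseudofunctor from 𝒜 to Cat. Then every premorphism (u, ξ, v) : (A, x) → (A, y) is equivalent to a premorphism (u′, ξ′, v′) with u′ = v′. -/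
open CategoryTheory Bicategory CategoryTheory.Limits

universe w₂ v₂ u₂ w v u p p' t s t' s' t₁ s₁ t₂ s₂

namespace DubucStreet

variable {𝒜 : Type u} [Bicategory.{w, v} 𝒜]

/-- Axiom FF1 : two cospans with the same feet can be simultaneously completed to
squares with invertible 2-cells. -/
def AxiomFF1 (𝒜 : Type u) [Bicategory.{w, v} 𝒜] : Prop :=
  ∀ {E₁ E₂ A B : 𝒜} (f₁ : E₁ ⟶ A) (g₁ : E₁ ⟶ B) (f₂ : E₂ ⟶ A) (g₂ : E₂ ⟶ B),
    ∃ (C : 𝒜) (u : A ⟶ C) (v : B ⟶ C),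
      Nonempty (f₁ ≫ u ≅ g₁ ≫ v) ∧ Nonempty (f₂ ≫ u ≅ g₂ ≫ v)

/-- Axiom F0 : every pair of objects admits a cospan. -/
def AxiomF0 (𝒜 : Type u) [Bicategory.{w, v} 𝒜] : Prop :=
  ∀ (A B : 𝒜), ∃ (C : 𝒜), Nonempty (A ⟶ C) ∧ Nonempty (B ⟶ C)

/-! Applying FF1 to the cospans `(u, v)` and `(𝟙, 𝟙)` yields `s` with an invertible
`θ : u ≫ s ≅ v ≫ s`. Pushing `ξ` forward along `s` and transporting it along `θ` gives a morphism
between the images of `x` and `y` under the single leg `v ≫ s`; since `F(𝟙)` is full it can be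
chosen so that `(s, 𝟙, ρ⁻¹, θ ≫ ρ⁻¹)` is a homotopy. -/

theorem AxiomFF1.exists_comp_iso_comp (hFF1 : AxiomFF1 𝒜) {A C : 𝒜} (u v : A ⟶ C) :
    ∃ (D : 𝒜) (s : C ⟶ D), Nonempty (u ≫ s ≅ v ≫ s) := by
  obtain ⟨D, s, t, ⟨γ⟩, ⟨δ⟩⟩ := hFF1 u v (𝟙 C) (𝟙 C)
  exact ⟨D, s, ⟨γ ≪≫ whiskerLeftIso v ((λ_ t).symm ≪≫ δ.symm ≪≫ λ_ s)⟩⟩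

section Homotopy

variable (F : Pseudofunctor 𝒜 Cat.{v₂, u₂})

theorem exists_homotopyLL_of_full {A B : 𝒜} {x : F.obj A} {y : F.obj B} (p : Premor F A B x y)
    {C V : 𝒜} (u : A ⟶ C) (v : B ⟶ C) (w₁ : p.cod ⟶ V) (w₂ : C ⟶ V) [(F.map w₂).toFunctor.Full]
    (α : p.v ≫ w₁ ⟶ v ≫ w₂) (β : p.u ≫ w₁ ≅ u ≫ w₂) :
    ∃ ξ, HomotopyLL F p ⟨C, u, v, ξ⟩ w₁ w₂ α β.hom := by
  let E : F.map p.u ≫ F.map w₁ ≅ F.map u ≫ F.map w₂ :=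
    (F.mapComp p.u w₁).symm ≪≫ F.map₂Iso β ≪≫ F.mapComp u w₂
  refine ⟨(F.map w₂).toFunctor.preimage (E.inv.toNatTrans.app x ≫ (F.map w₁).toFunctor.map p.ξ ≫
    (F.mapComp p.v w₁).inv.toNatTrans.app y ≫ (F.map₂ α).toNatTrans.app y ≫
    (F.mapComp v w₂).hom.toNatTrans.app y), ?_⟩
  have hE : (F.mapComp p.u w₁).inv.toNatTrans.app x ≫ (F.map₂ β.hom).toNatTrans.app x ≫
      (F.mapComp u w₂).hom.toNatTrans.app x = E.hom.toNatTrans.app x := by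
    simp [E]
  simp only [HomotopyLL, Functor.map_preimage, reassoc_of% hE,
    Cat.Hom.hom_inv_id_toNatTrans_app_assoc]

instance full_map_id (D : 𝒜) : (F.map (𝟙 D)).toFunctor.Full :=
  Functor.Full.of_iso (F := 𝟭 (F.obj D)) (Cat.Hom.toNatIso (F.mapId D)).symm

theorem exists_diagonal_preEquiv_of_iso {A : 𝒜} {x y : F.obj A} (p : Premor F A A x y) {D : 𝒜}
    (s : p.cod ⟶ D) (θ : p.u ≫ s ≅ p.v ≫ s) :
    ∃ q : Premor F A A x y, q.u = q.v ∧ PreEquiv F p q := by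
  obtain ⟨ξ, hξ⟩ := exists_homotopyLL_of_full F p (p.v ≫ s) (p.v ≫ s) s (𝟙 D)
    (ρ_ _).inv (θ ≪≫ (ρ_ _).symm)
  exact ⟨⟨D, p.v ≫ s, p.v ≫ s, ξ⟩, rfl, ⟨⟨D, s, 𝟙 D, (ρ_ _).symm, θ ≪≫ (ρ_ _).symm, hξ⟩⟩⟩

end Homotopy

theorem premorphism_equivalent_to_diagonal_general
    (hFF1 : AxiomFF1 𝒜)
    (F : Pseudofunctor 𝒜 Cat.{v₂, u₂}) {A : 𝒜} {x y : F.obj A}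
    (p : Premor F A A x y) :
    ∃ q : Premor F A A x y, q.u = q.v ∧ PreEquiv F p q := by
  obtain ⟨D, s, ⟨θ⟩⟩ := hFF1.exists_comp_iso_comp p.u p.v
  exact exists_diagonal_preEquiv_of_iso F p s θ

/-- In a pseudo 2-filtered 2-category, every premorphism `(A, x) → (A, y)` is
equivalent to a premorphism whose two legs coincide. -/
theorem premorphism_equivalent_to_diagonal [Bicategory.Strict 𝒜]
    (hFF1 : AxiomFF1 𝒜) (hF2 : AxiomF2 𝒜)
    (F : Pseudofunctor 𝒜 Cat.{v₂, u₂}) {A : 𝒜} {x y : F.obj A}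
    (p : Premor F A A x y) :
    ∃ q : Premor F A A x y, q.u = q.v ∧ PreEquiv F p q :=
  premorphism_equivalent_to_diagonal_general hFF1 F p

end DubucStreet
end
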